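/- arXiv:2301.09133 — 6 statements merged into one kernel-verified Lean document; each statement's English description precedes it below -/
import Mathlib

section
/- Let (D,*,∘) be a digroup, B a subdigroup (a subset that is a subgroup of both (D,*) and (D,∘)), and I an ideal of D. If D = B ∘ I and B ∩ I = {1}, then D = B * I, i.e., every element of D can be written as b * i with b ∈ B and i ∈ I. -/
structure Digroup (D : Type*) where
  mul : D → D → D
  inv : D → D
  cmul : D → D → D
  cinv : D → D
  one : D
  mul_assoc : ∀ a b c, mul (mul a b) c = mul a (mul b c)
  one_mul : ∀ a, mul one a = a
  mul_one : ∀ a, mul a one = a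
  inv_mul : ∀ a, mul (inv a) a = one
  mul_inv : ∀ a, mul a (inv a) = one
  cmul_assoc : ∀ a b c, cmul (cmul a b) c = cmul a (cmul b c)
  one_cmul : ∀ a, cmul one a = a
  cmul_one : ∀ a, cmul a one = a
  cinv_cmul : ∀ a, cmul (cinv a) a = one
  cmul_cinv : ∀ a, cmul a (cinv a) = one

/-- The map λ_a : b ↦ a⁻* * (a ∘ b). -/
def Digroup.lam {D : Type*} (G : Digroup D) (a b : D) : D :=
  G.mul (G.inv a) (G.cmul a b)

/-- The left skew brace condition. -/
def Digroup.IsSkewBrace {D : Type*} (G : Digroup D) : Prop :=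
  ∀ a b c, G.cmul a (G.mul b c) =
    G.mul (G.mul (G.cmul a b) (G.inv a)) (G.cmul a c)

/-- A subdigroup: a subset which is a subgroup for both operations. -/
def Digroup.IsSubdigroup {D : Type*} (G : Digroup D) (B : Set D) : Prop :=
  G.one ∈ B ∧ (∀ x ∈ B, ∀ y ∈ B, G.mul x y ∈ B) ∧ (∀ x ∈ B, G.inv x ∈ B) ∧
    (∀ x ∈ B, ∀ y ∈ B, G.cmul x y ∈ B) ∧ (∀ x ∈ B, G.cinv x ∈ B)

/-- An ideal: a normal subgroup of both groups with a * I = a ∘ I for all a. -/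
def Digroup.IsIdeal {D : Type*} (G : Digroup D) (I : Set D) : Prop :=
  G.one ∈ I ∧ (∀ x ∈ I, ∀ y ∈ I, G.mul x y ∈ I) ∧ (∀ x ∈ I, G.inv x ∈ I) ∧
    (∀ x ∈ I, ∀ y ∈ I, G.cmul x y ∈ I) ∧ (∀ x ∈ I, G.cinv x ∈ I) ∧
    (∀ a, ∀ x ∈ I, G.mul (G.mul a x) (G.inv a) ∈ I) ∧
    (∀ a, ∀ x ∈ I, G.cmul (G.cmul a x) (G.cinv a) ∈ I) ∧
    (∀ a, (fun x => G.mul a x) '' I = (fun x => G.cmul a x) '' I)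

theorem Digroup.IsIdeal.exists_mul_eq_cmul {D : Type*} {G : Digroup D} {I : Set D}
    (hI : G.IsIdeal I) (a : D) {i : D} (hi : i ∈ I) : ∃ j ∈ I, G.mul a j = G.cmul a i := by
  have hmem : G.cmul a i ∈ (fun x => G.mul a x) '' I := by
    rw [hI.2.2.2.2.2.2.2 a]
    exact ⟨i, hi, rfl⟩
  exact hmem

theorem semidirect_circ_implies_star_general {D : Type*} (G : Digroup D) (B I : Set D)
    (hI : G.IsIdeal I)
    (hgen : ∀ a, ∃ b ∈ B, ∃ i ∈ I, a = G.cmul b i) :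
    ∀ a, ∃ b ∈ B, ∃ i ∈ I, a = G.mul b i := by
  intro a
  obtain ⟨b, hb, i, hi, rfl⟩ := hgen a
  obtain ⟨j, hj, hji⟩ := hI.exists_mul_eq_cmul b hi
  exact ⟨b, hb, j, hj, hji.symm⟩

/-- If D = B ∘ I and B ∩ I = {1} for a subdigroup B and an ideal I, then D = B * I. -/
theorem semidirect_circ_implies_star {D : Type*} (G : Digroup D) (B I : Set D)
    (hB : G.IsSubdigroup B) (hI : G.IsIdeal I)
    (hgen : ∀ a, ∃ b ∈ B, ∃ i ∈ I, a = G.cmul b i)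
    (hint : B ∩ I = {G.one}) :
    ∀ a, ∃ b ∈ B, ∃ i ∈ I, a = G.mul b i :=
  semidirect_circ_implies_star_general G B I hI hgen
end

section
/- Let (D,*,∘) be a digroup, B a subdigroup and I an ideal of D with D = B ∘ I and B ∩ I = {1}. Then the map e : D → D sending a = b ∘ i (with b ∈ B, i ∈ I) to b is an endomorphism of the group (D,*), i.e., e(a₁ * a₂) = e(a₁) * e(a₂) for all a₁, a₂ ∈ D. -/
/-! Since `b * I = b ∘ I`, the decomposition `a = e a ∘ i` is also a `*`-coset decomposition
`a ∈ e a * I`, and `b ↦ b * I` is multiplicative because `I` is normal in `(D, *)`. So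
`a₁ * a₂ ∈ (e a₁ * e a₂) * I` with `e a₁ * e a₂ ∈ B`, and uniqueness of the decomposition
(from `B ∩ I = {1}`) forces `e (a₁ * a₂) = e a₁ * e a₂`. -/

namespace Digroup

variable {D : Type*} (G : Digroup D)

lemma mul_inv_cancel_left (a x : D) : G.mul a (G.mul (G.inv a) x) = x := by
  rw [← G.mul_assoc, G.mul_inv, G.one_mul]

lemma inv_inv (a : D) : G.inv (G.inv a) = a :=
  calc G.inv (G.inv a) = G.mul a (G.mul (G.inv a) (G.inv (G.inv a))) :=
        (G.mul_inv_cancel_left a _).symm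
    _ = a := by rw [G.mul_inv, G.mul_one]

lemma cmul_left_cancel {a x y : D} (h : G.cmul a x = G.cmul a y) : x = y := by
  have := congrArg (G.cmul (G.cinv a)) h
  rwa [← G.cmul_assoc, ← G.cmul_assoc, G.cinv_cmul, G.one_cmul, G.one_cmul] at this

variable {G}

lemma eq_of_cmul_eq_cmul {B I : Set D} (hB : G.IsSubdigroup B) (hI : G.IsIdeal I)
    (hint : B ∩ I = {G.one}) {b b' i i' : D} (hb : b ∈ B) (hb' : b' ∈ B)
    (hi : i ∈ I) (hi' : i' ∈ I) (h : G.cmul b i = G.cmul b' i') : b = b' := by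
  obtain ⟨-, -, -, hB_cmul, hB_cinv⟩ := hB
  obtain ⟨-, -, -, hI_cmul, hI_cinv, -⟩ := hI
  set x := G.cmul (G.cinv b') b with hx
  have hxi : G.cmul x i = i' := by
    rw [hx, G.cmul_assoc, h, ← G.cmul_assoc, G.cinv_cmul, G.one_cmul]
  have hxI : x ∈ I := by
    have : x = G.cmul i' (G.cinv i) := by
      rw [← hxi, G.cmul_assoc, G.cmul_cinv, G.cmul_one]
    exact this ▸ hI_cmul _ hi' _ (hI_cinv _ hi)
  have hx_one : x = G.one := by
    have : x ∈ B ∩ I := ⟨hB_cmul _ (hB_cinv _ hb') _ hb, hxI⟩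
    rwa [hint] at this
  apply G.cmul_left_cancel (a := G.cinv b')
  rw [← hx, hx_one, G.cinv_cmul]

namespace IsIdeal

variable {I : Set D} (hI : G.IsIdeal I)
include hI

lemma exists_cmul_eq_mul (a : D) {i : D} (hi : i ∈ I) : ∃ i' ∈ I, G.cmul a i = G.mul a i' := by
  obtain ⟨i', hi', h⟩ : G.cmul a i ∈ (fun x => G.mul a x) '' I :=
    hI.2.2.2.2.2.2.2 a ▸ ⟨i, hi, rfl⟩
  exact ⟨i', hi', h.symm⟩

lemma exists_mul_eq_cmul_s5 (a : D) {i : D} (hi : i ∈ I) : ∃ i' ∈ I, G.mul a i = G.cmul a i' := by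
  obtain ⟨i', hi', h⟩ : G.mul a i ∈ (fun x => G.cmul a x) '' I :=
    hI.2.2.2.2.2.2.2 a ▸ ⟨i, hi, rfl⟩
  exact ⟨i', hi', h.symm⟩

lemma exists_mul_mul_eq_mul (b₁ b₂ : D) {i₁ i₂ : D} (hi₁ : i₁ ∈ I) (hi₂ : i₂ ∈ I) :
    ∃ j ∈ I, G.mul (G.mul b₁ i₁) (G.mul b₂ i₂) = G.mul (G.mul b₁ b₂) j := by
  have hk : G.mul (G.mul (G.inv b₂) i₁) b₂ ∈ I := by
    simpa only [G.inv_inv] using hI.2.2.2.2.2.1 (G.inv b₂) i₁ hi₁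
  refine ⟨G.mul (G.mul (G.mul (G.inv b₂) i₁) b₂) i₂, hI.2.1 _ hk _ hi₂, ?_⟩
  simp only [G.mul_assoc, G.mul_inv_cancel_left]

end IsIdeal

lemma apply_eq_of_eq_mul {B I : Set D} (hB : G.IsSubdigroup B) (hI : G.IsIdeal I)
    (hint : B ∩ I = {G.one}) {e : D → D} (he : ∀ a, e a ∈ B ∧ ∃ i ∈ I, a = G.cmul (e a) i)
    {a b i : D} (hb : b ∈ B) (hi : i ∈ I) (ha : a = G.mul b i) : e a = b := by
  obtain ⟨hea, i₀, hi₀, ha₀⟩ := he a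
  obtain ⟨i', hi', hbi⟩ := hI.exists_mul_eq_cmul_s5 b hi
  exact eq_of_cmul_eq_cmul hB hI hint hea hb hi₀ hi' (ha₀ ▸ ha.trans hbi)

end Digroup

theorem projection_star_endomorphism_general {D : Type*} (G : Digroup D) (B I : Set D)
    (hB : G.IsSubdigroup B) (hI : G.IsIdeal I)
    (hint : B ∩ I = {G.one})
    (e : D → D)
    (he : ∀ a, e a ∈ B ∧ ∃ i ∈ I, a = G.cmul (e a) i) :
    ∀ a₁ a₂, e (G.mul a₁ a₂) = G.mul (e a₁) (e a₂) := by
  intro a₁ a₂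
  obtain ⟨hb₁, i₁, hi₁, ha₁⟩ := he a₁
  obtain ⟨hb₂, i₂, hi₂, ha₂⟩ := he a₂
  obtain ⟨i₁', hi₁', h₁⟩ := hI.exists_cmul_eq_mul (e a₁) hi₁
  obtain ⟨i₂', hi₂', h₂⟩ := hI.exists_cmul_eq_mul (e a₂) hi₂
  obtain ⟨j, hj, hprod⟩ := hI.exists_mul_mul_eq_mul (e a₁) (e a₂) hi₁' hi₂'
  refine Digroup.apply_eq_of_eq_mul hB hI hint he (hB.2.1 _ hb₁ _ hb₂) hj ?_
  rw [← hprod, ← h₁, ← h₂, ← ha₁, ← ha₂]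

/-- If D = B ∘ I, B ∩ I = {1}, the projection e : b ∘ i ↦ b is an endomorphism of (D,*). -/
theorem projection_star_endomorphism {D : Type*} (G : Digroup D) (B I : Set D)
    (hB : G.IsSubdigroup B) (hI : G.IsIdeal I)
    (hgen : ∀ a, ∃ b ∈ B, ∃ i ∈ I, a = G.cmul b i)
    (hint : B ∩ I = {G.one})
    (e : D → D)
    (he : ∀ a, e a ∈ B ∧ ∃ i ∈ I, a = G.cmul (e a) i) :
    ∀ a₁ a₂, e (G.mul a₁ a₂) = G.mul (e a₁) (e a₂) :=
  projection_star_endomorphism_general G B I hB hI hint e he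
end

section
/- Let (D,*,∘) be a digroup, B a subdigroup and I an ideal of D with D = B * I and B ∩ I = {1}. Then the map e : D → D sending a = b * i (with b ∈ B, i ∈ I) to b is an endomorphism of the group (D,∘), i.e., e(a₁ ∘ a₂) = e(a₁) ∘ e(a₂) for all a₁, a₂ ∈ D. -/
/-! Since `a * I = a ∘ I`, the factorization `a ∈ e a * I` can be read as `a ∈ e a ∘ I`. As `I` is
normal in `(D, ∘)`, this gives `a₁ ∘ a₂ ∈ (e a₁ ∘ e a₂) ∘ I = (e a₁ ∘ e a₂) * I`, and `B ∩ I = {1}`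
makes the `B`-factor of such a product unique. -/

namespace Digroup

variable {D : Type*} (G : Digroup D)

theorem inv_mul_cancel_left (a b : D) : G.mul (G.inv a) (G.mul a b) = b := by
  rw [← G.mul_assoc, G.inv_mul, G.one_mul]

theorem cinv_cinv (a : D) : G.cinv (G.cinv a) = a := by
  simpa only [G.cmul_cinv, G.one_cmul, G.cmul_one] using
    G.cmul_assoc a (G.cinv a) (G.cinv (G.cinv a))

variable {G}

theorem IsIdeal.cmul_mem_cmul_image {I : Set D} (hI : G.IsIdeal I) {a₁ a₂ b₁ b₂ : D}
    (h₁ : a₁ ∈ G.cmul b₁ '' I) (h₂ : a₂ ∈ G.cmul b₂ '' I) :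
    G.cmul a₁ a₂ ∈ G.cmul (G.cmul b₁ b₂) '' I := by
  obtain ⟨i, hi, rfl⟩ := h₁
  obtain ⟨j, hj, rfl⟩ := h₂
  -- `b₁ ∘ i ∘ b₂ ∘ j = (b₁ ∘ b₂) ∘ (b₂⁻ ∘ i ∘ b₂) ∘ j`, and `I` is normal in `(D, ∘)`.
  have hconj : G.cmul (G.cmul (G.cinv b₂) i) b₂ ∈ I := by
    simpa only [G.cinv_cinv] using hI.2.2.2.2.2.2.1 (G.cinv b₂) i hi
  refine ⟨_, hI.2.2.2.1 _ hconj _ hj, ?_⟩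
  simp only [G.cmul_assoc]
  rw [← G.cmul_assoc b₂, G.cmul_cinv, G.one_cmul]

theorem eq_of_mem_mul_image {B I : Set D} (hB : G.IsSubdigroup B) (hI : G.IsIdeal I)
    (hint : B ∩ I = {G.one}) {a b b' : D} (hb : b ∈ B) (hb' : b' ∈ B)
    (ha : a ∈ G.mul b '' I) (ha' : a ∈ G.mul b' '' I) : b = b' := by
  obtain ⟨i, hi, rfl⟩ := ha
  obtain ⟨i', hi', heq⟩ := ha'
  have hquot : G.mul (G.inv b') b = G.mul i' (G.inv i) := by
    rw [← G.inv_mul_cancel_left b' i', heq, ← G.mul_assoc, G.mul_assoc _ i, G.mul_inv,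
      G.mul_one]
  have hone : G.mul (G.inv b') b ∈ B ∩ I :=
    ⟨hB.2.1 _ (hB.2.2.1 _ hb') _ hb, hquot ▸ hI.2.1 _ hi' _ (hI.2.2.1 _ hi)⟩
  rw [hint, Set.mem_singleton_iff] at hone
  calc b = G.mul b' (G.mul (G.inv b') b) := by rw [← G.mul_assoc, G.mul_inv, G.one_mul]
    _ = b' := by rw [hone, G.mul_one]

end Digroup

theorem projection_circ_endomorphism_general {D : Type*} (G : Digroup D) (B I : Set D)
    (hB : G.IsSubdigroup B) (hI : G.IsIdeal I)
    (hint : B ∩ I = {G.one})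
    (e : D → D)
    (he : ∀ a, e a ∈ B ∧ ∃ i ∈ I, a = G.mul (e a) i) :
    ∀ a₁ a₂, e (G.cmul a₁ a₂) = G.cmul (e a₁) (e a₂) := by
  have hcoset (a : D) : a ∈ G.mul (e a) '' I := by
    obtain ⟨-, i, hi, ha⟩ := he a
    exact ⟨i, hi, ha.symm⟩
  have hcoset' (a : D) : a ∈ G.cmul (e a) '' I := hI.2.2.2.2.2.2.2 (e a) ▸ hcoset a
  intro a₁ a₂
  refine G.eq_of_mem_mul_image hB hI hint (he _).1 (hB.2.2.2.1 _ (he a₁).1 _ (he a₂).1)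
    (hcoset _) ?_
  rw [hI.2.2.2.2.2.2.2]
  exact hI.cmul_mem_cmul_image (hcoset' a₁) (hcoset' a₂)

/-- If D = B * I, B ∩ I = {1}, the projection e : b * i ↦ b is an endomorphism of (D,∘). -/
theorem projection_circ_endomorphism {D : Type*} (G : Digroup D) (B I : Set D)
    (hB : G.IsSubdigroup B) (hI : G.IsIdeal I)
    (hgen : ∀ a, ∃ b ∈ B, ∃ i ∈ I, a = G.mul b i)
    (hint : B ∩ I = {G.one})
    (e : D → D)
    (he : ∀ a, e a ∈ B ∧ ∃ i ∈ I, a = G.mul (e a) i) :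
    ∀ a₁ a₂, e (G.cmul a₁ a₂) = G.cmul (e a₁) (e a₂) :=
  projection_circ_endomorphism_general G B I hB hI hint e he
end

section
/- Let (Y,*,∘) and (K,*,∘) be digroups, φ_* : (Y,*) → Aut(K,*) and φ_∘ : (Y,∘) → Aut(K,∘) group antihomomorphisms, and Λ : Y → Sym(K) a map with Λ_1 = id and Λ_y(1) = 1 for all y. Define on Y × K the operations (y,k) + (y',k') = (y * y', (Λ_{y*y'})⁻¹(φ_{*y'}(Λ_y(k)) * Λ_{y'}(k'))) and (y,k) ∘ (y',k') = (y ∘ y', φ_{∘y'}(k) ∘ k'). Then (Y × K, +, ∘) is a digroup, with identity (1,1). -/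
/-!
The operation `∘` is the semidirect product of `(Y,∘)` and `(K,∘)` for the right action `φ_∘`.
The operation `+` is the semidirect product of `(Y,*)` and `(K,*)` for `φ_*`, transported along
the bijection `(y,k) ↦ (y, Λ_y k)` of `Y × K`; the condition `Λ_1 = id` makes this bijection fix
`(1,1)`.
-/

structure IsGroupLaw {T : Type*} (op : T → T → T) (e : T) : Prop where
  assoc : ∀ p q r, op (op p q) r = op p (op q r)
  one_op : ∀ p, op e p = p
  op_one : ∀ p, op p e = p
  exists_inv : ∀ p, ∃ q, op q p = e ∧ op p q = e

namespace IsGroupLaw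

variable {T : Type*} {op : T → T → T} {e : T}

theorem eq_of_op_self (h : IsGroupLaw op e) {x : T} (hx : op x x = x) : x = e := by
  obtain ⟨y, hyx, -⟩ := h.exists_inv x
  calc x = op (op y x) x := by rw [hyx, h.one_op]
    _ = op y x := by rw [h.assoc, hx]
    _ = e := hyx

theorem equiv_conj {S : Type*} (h : IsGroupLaw op e) (Φ : S ≃ T) :
    IsGroupLaw (fun x y => Φ.symm (op (Φ x) (Φ y))) (Φ.symm e) where
  assoc p q r := by simp only [Equiv.apply_symm_apply, h.assoc]
  one_op p := by simp only [Equiv.apply_symm_apply, h.one_op, Equiv.symm_apply_apply]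
  op_one p := by simp only [Equiv.apply_symm_apply, h.op_one, Equiv.symm_apply_apply]
  exists_inv p := by
    obtain ⟨q, hqp, hpq⟩ := h.exists_inv (Φ p)
    exact ⟨Φ.symm q, by simp only [Equiv.apply_symm_apply, hqp, hpq, and_self]⟩

end IsGroupLaw

theorem Digroup.isGroupLaw_mul {D : Type*} (G : Digroup D) : IsGroupLaw G.mul G.one :=
  ⟨G.mul_assoc, G.one_mul, G.mul_one, fun a => ⟨G.inv a, G.inv_mul a, G.mul_inv a⟩⟩

theorem Digroup.isGroupLaw_cmul {D : Type*} (G : Digroup D) : IsGroupLaw G.cmul G.one :=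
  ⟨G.cmul_assoc, G.one_cmul, G.cmul_one, fun a => ⟨G.cinv a, G.cinv_cmul a, G.cmul_cinv a⟩⟩

def semidirectOp {A B : Type*} (mA : A → A → A) (mB : B → B → B) (φ : A → B → B) :
    A × B → A × B → A × B :=
  fun p q => (mA p.1 q.1, mB (φ q.1 p.2) q.2)

section Semidirect

variable {A B : Type*} {mA : A → A → A} {mB : B → B → B} {eA : A} {eB : B} {φ : A → B → B}

theorem isGroupLaw_semidirectOp (hA : IsGroupLaw mA eA) (hB : IsGroupLaw mB eB)
    (hφ_hom : ∀ a b b', φ a (mB b b') = mB (φ a b) (φ a b'))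
    (hφ_anti : ∀ a a' b, φ (mA a a') b = φ a' (φ a b))
    (hφ_inj : ∀ a, Function.Injective (φ a)) :
    IsGroupLaw (semidirectOp mA mB φ) (eA, eB) := by
  have φ_one : ∀ a, φ a eB = eB := fun a =>
    hB.eq_of_op_self (by rw [← hφ_hom, hB.one_op])
  have one_φ : ∀ b, φ eA b = b := fun b =>
    hφ_inj eA (by rw [← hφ_anti, hA.one_op])
  refine ⟨fun p q r => ?_, fun p => ?_, fun p => ?_, fun ⟨a, b⟩ => ?_⟩
  · simp only [semidirectOp, hA.assoc, hφ_hom, hφ_anti, hB.assoc]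
  · simp only [semidirectOp, hA.one_op, φ_one, hB.one_op]
  · simp only [semidirectOp, hA.op_one, one_φ, hB.op_one]
  · obtain ⟨a', ha'a, haa'⟩ := hA.exists_inv a
    obtain ⟨d, hd, hd'⟩ := hB.exists_inv (φ a' b)
    have hb : φ a (φ a' b) = b := by rw [← hφ_anti, ha'a, one_φ]
    refine ⟨(a', d), Prod.ext ha'a ?_, Prod.ext haa' hd'⟩
    calc mB (φ a d) b = mB (φ a d) (φ a (φ a' b)) := by rw [hb]
      _ = eB := by rw [← hφ_hom, hd, φ_one]

end Semidirect

theorem outer_semidirect_digroup_general {Yt Kt : Type*} (Y : Digroup Yt) (K : Digroup Kt)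
    (φs φc : Yt → Kt → Kt) (Λ Λi : Yt → Kt → Kt)
    (hφs_bij : ∀ y, Function.Bijective (φs y))
    (hφs_hom : ∀ y k k', φs y (K.mul k k') = K.mul (φs y k) (φs y k'))
    (hφs_anti : ∀ y y' k, φs (Y.mul y y') k = φs y' (φs y k))
    (hφc_bij : ∀ y, Function.Bijective (φc y))
    (hφc_hom : ∀ y k k', φc y (K.cmul k k') = K.cmul (φc y k) (φc y k'))
    (hφc_anti : ∀ y y' k, φc (Y.cmul y y') k = φc y' (φc y k))
    (hΛi_l : ∀ y, Function.LeftInverse (Λi y) (Λ y))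
    (hΛi_r : ∀ y, Function.RightInverse (Λi y) (Λ y))
    (hΛ_one : ∀ k, Λ Y.one k = k)
    (add circ : Yt × Kt → Yt × Kt → Yt × Kt)
    (hadd : ∀ p q, add p q =
      (Y.mul p.1 q.1, Λi (Y.mul p.1 q.1) (K.mul (φs q.1 (Λ p.1 p.2)) (Λ q.1 q.2))))
    (hcirc : ∀ p q, circ p q = (Y.cmul p.1 q.1, K.cmul (φc q.1 p.2) q.2)) :
    (∀ p q r, add (add p q) r = add p (add q r)) ∧
    (∀ p, add (Y.one, K.one) p = p) ∧ (∀ p, add p (Y.one, K.one) = p) ∧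
    (∀ p, ∃ q, add q p = (Y.one, K.one) ∧ add p q = (Y.one, K.one)) ∧
    (∀ p q r, circ (circ p q) r = circ p (circ q r)) ∧
    (∀ p, circ (Y.one, K.one) p = p) ∧ (∀ p, circ p (Y.one, K.one) = p) ∧
    (∀ p, ∃ q, circ q p = (Y.one, K.one) ∧ circ p q = (Y.one, K.one)) := by
  let Φ : Yt × Kt ≃ Yt × Kt :=
    Equiv.prodShear (Equiv.refl Yt) fun y => ⟨Λ y, Λi y, hΛi_l y, hΛi_r y⟩
  have hΦ_one : Φ.symm (Y.one, K.one) = (Y.one, K.one) :=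
    Φ.symm_apply_eq.2 (congrArg (Prod.mk Y.one) (hΛ_one K.one)).symm
  have hadd_conj : add = fun p q => Φ.symm (semidirectOp Y.mul K.mul φs (Φ p) (Φ q)) :=
    funext₂ hadd
  have hcirc_semidirect : circ = semidirectOp Y.cmul K.cmul φc := funext₂ hcirc
  obtain ⟨add_assoc, one_add, add_one, exists_add_inv⟩ : IsGroupLaw add (Y.one, K.one) := by
    rw [hadd_conj, ← hΦ_one]
    exact (isGroupLaw_semidirectOp Y.isGroupLaw_mul K.isGroupLaw_mul hφs_hom hφs_anti
      fun y => (hφs_bij y).1).equiv_conj Φ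
  obtain ⟨circ_assoc, one_circ, circ_one, exists_circ_inv⟩ : IsGroupLaw circ (Y.one, K.one) := by
    rw [hcirc_semidirect]
    exact isGroupLaw_semidirectOp Y.isGroupLaw_cmul K.isGroupLaw_cmul hφc_hom hφc_anti
      fun y => (hφc_bij y).1
  exact ⟨add_assoc, one_add, add_one, exists_add_inv,
    circ_assoc, one_circ, circ_one, exists_circ_inv⟩

/-- Outer semidirect product of digroups is a digroup (Theorem: outer semidirect product). -/
theorem outer_semidirect_digroup {Yt Kt : Type*} (Y : Digroup Yt) (K : Digroup Kt)
    (φs φc : Yt → Kt → Kt) (Λ Λi : Yt → Kt → Kt)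
    (hφs_bij : ∀ y, Function.Bijective (φs y))
    (hφs_hom : ∀ y k k', φs y (K.mul k k') = K.mul (φs y k) (φs y k'))
    (hφs_anti : ∀ y y' k, φs (Y.mul y y') k = φs y' (φs y k))
    (hφc_bij : ∀ y, Function.Bijective (φc y))
    (hφc_hom : ∀ y k k', φc y (K.cmul k k') = K.cmul (φc y k) (φc y k'))
    (hφc_anti : ∀ y y' k, φc (Y.cmul y y') k = φc y' (φc y k))
    (hΛ_bij : ∀ y, Function.Bijective (Λ y))
    (hΛi_l : ∀ y, Function.LeftInverse (Λi y) (Λ y))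
    (hΛi_r : ∀ y, Function.RightInverse (Λi y) (Λ y))
    (hΛ_one : ∀ k, Λ Y.one k = k) (hΛ_pt : ∀ y, Λ y K.one = K.one)
    (add circ : Yt × Kt → Yt × Kt → Yt × Kt)
    (hadd : ∀ p q, add p q =
      (Y.mul p.1 q.1, Λi (Y.mul p.1 q.1) (K.mul (φs q.1 (Λ p.1 p.2)) (Λ q.1 q.2))))
    (hcirc : ∀ p q, circ p q = (Y.cmul p.1 q.1, K.cmul (φc q.1 p.2) q.2)) :
    (∀ p q r, add (add p q) r = add p (add q r)) ∧
    (∀ p, add (Y.one, K.one) p = p) ∧ (∀ p, add p (Y.one, K.one) = p) ∧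
    (∀ p, ∃ q, add q p = (Y.one, K.one) ∧ add p q = (Y.one, K.one)) ∧
    (∀ p q r, circ (circ p q) r = circ p (circ q r)) ∧
    (∀ p, circ (Y.one, K.one) p = p) ∧ (∀ p, circ p (Y.one, K.one) = p) ∧
    (∀ p, ∃ q, circ q p = (Y.one, K.one) ∧ circ p q = (Y.one, K.one)) :=
  outer_semidirect_digroup_general Y K φs φc Λ Λi hφs_bij hφs_hom hφs_anti hφc_bij hφc_hom hφc_anti
    hΛi_l hΛi_r hΛ_one add circ hadd hcirc
end

section
/- Consider ℤ × ℤ with operations (y,k) * (y',k') = (y + y', k + (-1)^y k') and (y,k) ∘ (y',k') = (y + y', (-1)^{y'} k + (-1)^y k'). Then (ℤ × ℤ, *, ∘) is a left skew brace. -/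
/-- (-1)^y for y : ℤ. -/
def msign (y : ℤ) : ℤ := (((-1 : ℤˣ) ^ y : ℤˣ) : ℤ)

/-- (y,k) * (y',k') = (y + y', k + (-1)^y k') -/
def smul13 (p q : ℤ × ℤ) : ℤ × ℤ := (p.1 + q.1, p.2 + msign p.1 * q.2)

/-- (y,k) ∘ (y',k') = (y + y', (-1)^{y'} k + (-1)^y k') -/
def cmul13 (p q : ℤ × ℤ) : ℤ × ℤ := (p.1 + q.1, msign q.1 * p.2 + msign p.1 * q.2)

/-- The inverse of (y,k) with respect to *. -/
def sinv13 (p : ℤ × ℤ) : ℤ × ℤ := (-p.1, -(msign (-p.1) * p.2))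

/-!
Write `s y = (-1)^y`; it is a homomorphism `ℤ → {±1}`, so `s (y + y') = s y * s y'` and
`s y * s y = 1`. With these two rules every axiom becomes a ring identity in the components.
For the brace identity the key computation is `(a ∘ b) * a⁻* = (b₁, s a₁ * b₂)`: the `a₂`-terms
cancel, and the identity reduces to `a ∘ (b * c) = (b₁, s a₁ * b₂) * (a ∘ c)`.
-/

lemma msign_eq_negOnePow (y : ℤ) : msign y = y.negOnePow := rfl

@[simp]
lemma msign_zero : msign 0 = 1 := by
  simp [msign_eq_negOnePow]

lemma msign_add (y y' : ℤ) : msign (y + y') = msign y * msign y' := by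
  simp [msign_eq_negOnePow, Int.negOnePow_add]

lemma msign_neg (y : ℤ) : msign (-y) = msign y := by
  simp [msign_eq_negOnePow]

lemma msign_mul_self (y : ℤ) : msign y * msign y = 1 := by
  rw [msign_eq_negOnePow, ← Units.val_mul, Int.units_mul_self, Units.val_one]

lemma smul13_assoc (p q r : ℤ × ℤ) : smul13 (smul13 p q) r = smul13 p (smul13 q r) := by
  ext <;> simp only [smul13, msign_add] <;> ring

lemma zero_smul13 (p : ℤ × ℤ) : smul13 (0, 0) p = p := by
  simp [smul13]

lemma smul13_zero (p : ℤ × ℤ) : smul13 p (0, 0) = p := by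
  simp [smul13]

lemma sinv13_smul13 (p : ℤ × ℤ) : smul13 (sinv13 p) p = (0, 0) := by
  ext <;> simp [smul13, sinv13]

lemma smul13_sinv13 (p : ℤ × ℤ) : smul13 p (sinv13 p) = (0, 0) := by
  ext
  · simp [smul13, sinv13]
  · simp only [smul13, sinv13, msign_neg]
    linear_combination -p.2 * msign_mul_self p.1

lemma cmul13_assoc (p q r : ℤ × ℤ) : cmul13 (cmul13 p q) r = cmul13 p (cmul13 q r) := by
  ext <;> simp only [cmul13, msign_add] <;> ring

lemma zero_cmul13 (p : ℤ × ℤ) : cmul13 (0, 0) p = p := by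
  simp [cmul13]

lemma cmul13_zero (p : ℤ × ℤ) : cmul13 p (0, 0) = p := by
  simp [cmul13]

lemma cmul13_neg (p : ℤ × ℤ) : cmul13 p (-p) = (0, 0) := by
  ext
  · simp [cmul13]
  · simp only [cmul13, Prod.fst_neg, Prod.snd_neg, msign_neg]
    ring

lemma neg_cmul13 (p : ℤ × ℤ) : cmul13 (-p) p = (0, 0) := by
  ext
  · simp [cmul13]
  · simp only [cmul13, Prod.fst_neg, Prod.snd_neg, msign_neg]
    ring

lemma smul13_cmul13_sinv13 (a b : ℤ × ℤ) :
    smul13 (cmul13 a b) (sinv13 a) = (b.1, msign a.1 * b.2) := by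
  ext
  · simp [smul13, cmul13, sinv13]
  · simp only [smul13, cmul13, sinv13, msign_add, msign_neg]
    linear_combination -(msign b.1 * a.2) * msign_mul_self a.1

lemma cmul13_smul13 (a b c : ℤ × ℤ) :
    cmul13 a (smul13 b c) = smul13 (smul13 (cmul13 a b) (sinv13 a)) (cmul13 a c) := by
  rw [smul13_cmul13_sinv13]
  ext <;> simp only [smul13, cmul13, msign_add] <;> ring

/-- (ℤ × ℤ, *, ∘) with the above operations is a left skew brace. -/
theorem zxz_skew_brace :
    (∀ p q r, smul13 (smul13 p q) r = smul13 p (smul13 q r)) ∧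
    (∀ p, smul13 (0, 0) p = p) ∧ (∀ p, smul13 p (0, 0) = p) ∧
    (∀ p, smul13 (sinv13 p) p = (0, 0) ∧ smul13 p (sinv13 p) = (0, 0)) ∧
    (∀ p q r, cmul13 (cmul13 p q) r = cmul13 p (cmul13 q r)) ∧
    (∀ p, cmul13 (0, 0) p = p) ∧ (∀ p, cmul13 p (0, 0) = p) ∧
    (∀ p, ∃ q, cmul13 q p = (0, 0) ∧ cmul13 p q = (0, 0)) ∧
    (∀ a b c, cmul13 a (smul13 b c) =
      smul13 (smul13 (cmul13 a b) (sinv13 a)) (cmul13 a c)) :=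
  ⟨smul13_assoc, zero_smul13, smul13_zero, fun p => ⟨sinv13_smul13 p, smul13_sinv13 p⟩,
    cmul13_assoc, zero_cmul13, cmul13_zero, fun p => ⟨-p, neg_cmul13 p, cmul13_neg p⟩,
    cmul13_smul13⟩
end

section
/- In a left skew brace (A,*,∘), the set Z = {z ∈ A : a * z = z * a, a ∘ z = z ∘ a, and a * z = a ∘ z for every a ∈ A} is a subgroup of both (A,*) and (A,∘), and for z ∈ Z and a ∈ A one has λ_a(z) = z (where λ_a(x) = a⁻* * (a ∘ x)); consequently a * Z = a ∘ Z for every a ∈ A, so Z is an ideal of A. -/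
/-! For `z ∈ Z` we have `a ∘ z = a * z = z * a`, so `a * z * a⁻ = z` and the skew brace law
collapses to `a ∘ (z * c) = z * (a ∘ c)`. With `c = z⁻` this gives `a ∘ z⁻ = z⁻ * a`; in particular
`z⁻` is also the `∘`-inverse of `z`, which yields closure under inverses. With `c ∈ Z` it gives
closure under `*`, and closure under `∘` follows because `x ∘ y = x * y` whenever `y ∈ Z`. -/

namespace Digroup

variable {D : Type*} (G : Digroup D)

/-- Exchanging the two operations lets each fact about `*` below also serve for `∘`. -/
def flip : Digroup D where
  mul := G.cmul
  inv := G.cinv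
  cmul := G.mul
  cinv := G.inv
  one := G.one
  mul_assoc := G.cmul_assoc
  one_mul := G.one_cmul
  mul_one := G.cmul_one
  inv_mul := G.cinv_cmul
  mul_inv := G.cmul_cinv
  cmul_assoc := G.mul_assoc
  one_cmul := G.one_mul
  cmul_one := G.mul_one
  cinv_cmul := G.inv_mul
  cmul_cinv := G.mul_inv

theorem inv_eq_of_mul_eq_one {a b : D} (h : G.mul a b = G.one) : G.inv a = b := by
  rw [← G.mul_one (G.inv a), ← h, G.inv_mul_cancel_left]

theorem mul_mul_inv_of_commute {a z : D} (h : G.mul a z = G.mul z a) :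
    G.mul (G.mul a z) (G.inv a) = z := by
  rw [h, G.mul_assoc, G.mul_inv, G.mul_one]

theorem commute_inv_of_commute {a z : D} (h : G.mul a z = G.mul z a) :
    G.mul a (G.inv z) = G.mul (G.inv z) a :=
  calc G.mul a (G.inv z)
      = G.mul (G.inv z) (G.mul (G.mul z a) (G.inv z)) := by
        rw [G.mul_assoc, G.inv_mul_cancel_left]
    _ = G.mul (G.inv z) a := by rw [← h, G.mul_assoc, G.mul_inv, G.mul_one]

theorem commute_mul_of_commute {a x y : D} (hx : G.mul a x = G.mul x a)
    (hy : G.mul a y = G.mul y a) : G.mul a (G.mul x y) = G.mul (G.mul x y) a := by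
  rw [← G.mul_assoc, hx, G.mul_assoc, hy, G.mul_assoc]

def center : Set D :=
  {z | ∀ a, G.mul a z = G.mul z a ∧ G.cmul a z = G.cmul z a ∧ G.mul a z = G.cmul a z}

variable {G} {z : D}

theorem mul_comm_of_mem_center (hz : z ∈ G.center) (a : D) : G.mul a z = G.mul z a :=
  (hz a).1

theorem cmul_comm_of_mem_center (hz : z ∈ G.center) (a : D) : G.cmul a z = G.cmul z a :=
  (hz a).2.1

theorem mul_eq_cmul_of_mem_center (hz : z ∈ G.center) (a : D) : G.mul a z = G.cmul a z :=
  (hz a).2.2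

theorem one_mem_center : G.one ∈ G.center := fun a =>
  ⟨by rw [G.mul_one, G.one_mul], by rw [G.cmul_one, G.one_cmul], by rw [G.mul_one, G.cmul_one]⟩

theorem lam_of_mem_center (hz : z ∈ G.center) (a : D) : G.lam a z = z := by
  rw [lam, ← mul_eq_cmul_of_mem_center hz, G.inv_mul_cancel_left]

theorem image_mul_center_eq_image_cmul (a : D) :
    (fun z => G.mul a z) '' G.center = (fun z => G.cmul a z) '' G.center :=
  Set.image_congr fun _ hz => mul_eq_cmul_of_mem_center hz a

theorem mul_conj_mem_center (hz : z ∈ G.center) (a : D) :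
    G.mul (G.mul a z) (G.inv a) ∈ G.center := by
  rwa [G.mul_mul_inv_of_commute (mul_comm_of_mem_center hz a)]

theorem cmul_conj_mem_center (hz : z ∈ G.center) (a : D) :
    G.cmul (G.cmul a z) (G.cinv a) ∈ G.center := by
  rwa [show G.cmul (G.cmul a z) (G.cinv a) = z from
    G.flip.mul_mul_inv_of_commute (cmul_comm_of_mem_center hz a)]

theorem cmul_mul_of_mem_center (hsb : G.IsSkewBrace) (hz : z ∈ G.center) (a c : D) :
    G.cmul a (G.mul z c) = G.mul z (G.cmul a c) := by
  rw [hsb, ← mul_eq_cmul_of_mem_center hz,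
    G.mul_mul_inv_of_commute (mul_comm_of_mem_center hz a)]

theorem cmul_inv_of_mem_center (hsb : G.IsSkewBrace) (hz : z ∈ G.center) (a : D) :
    G.cmul a (G.inv z) = G.mul (G.inv z) a := by
  have h := cmul_mul_of_mem_center hsb hz a (G.inv z)
  rw [G.mul_inv, G.cmul_one] at h
  calc G.cmul a (G.inv z)
      = G.mul (G.inv z) (G.mul z (G.cmul a (G.inv z))) := (G.inv_mul_cancel_left _ _).symm
    _ = G.mul (G.inv z) a := by rw [← h]

theorem cinv_eq_inv_of_mem_center (hsb : G.IsSkewBrace) (hz : z ∈ G.center) :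
    G.cinv z = G.inv z :=
  G.flip.inv_eq_of_mul_eq_one (show G.cmul z (G.inv z) = G.one by
    rw [cmul_inv_of_mem_center hsb hz, G.inv_mul])

theorem mul_mem_center (hsb : G.IsSkewBrace) {x y : D} (hx : x ∈ G.center)
    (hy : y ∈ G.center) : G.mul x y ∈ G.center := fun a =>
  ⟨G.commute_mul_of_commute (mul_comm_of_mem_center hx a) (mul_comm_of_mem_center hy a),
    by
      rw [mul_eq_cmul_of_mem_center hy x]
      exact G.flip.commute_mul_of_commute (cmul_comm_of_mem_center hx a)
        (cmul_comm_of_mem_center hy a),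
    by
      rw [cmul_mul_of_mem_center hsb hx, ← mul_eq_cmul_of_mem_center hy, ← G.mul_assoc,
        mul_comm_of_mem_center hx a, G.mul_assoc]⟩

theorem inv_mem_center (hsb : G.IsSkewBrace) (hz : z ∈ G.center) : G.inv z ∈ G.center :=
  fun a =>
  ⟨G.commute_inv_of_commute (mul_comm_of_mem_center hz a),
    by
      rw [← cinv_eq_inv_of_mem_center hsb hz]
      exact G.flip.commute_inv_of_commute (cmul_comm_of_mem_center hz a),
    by rw [cmul_inv_of_mem_center hsb hz, G.commute_inv_of_commute (mul_comm_of_mem_center hz a)]⟩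

theorem cmul_mem_center (hsb : G.IsSkewBrace) {x y : D} (hx : x ∈ G.center)
    (hy : y ∈ G.center) : G.cmul x y ∈ G.center := by
  rw [← mul_eq_cmul_of_mem_center hy x]
  exact mul_mem_center hsb hx hy

theorem cinv_mem_center (hsb : G.IsSkewBrace) (hz : z ∈ G.center) : G.cinv z ∈ G.center := by
  rw [cinv_eq_inv_of_mem_center hsb hz]
  exact inv_mem_center hsb hz

end Digroup

open Digroup in
/-- The center Z = {z : a*z = z*a, a∘z = z∘a, a*z = a∘z for all a} of a left skew
brace is a subgroup of both groups, satisfies λ_a(z) = z, and is an ideal. -/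
theorem center_is_ideal {A : Type*} (G : Digroup A) (hsb : G.IsSkewBrace) :
    let Z : Set A := {z | ∀ a, G.mul a z = G.mul z a ∧ G.cmul a z = G.cmul z a ∧
      G.mul a z = G.cmul a z}
    G.one ∈ Z ∧
    (∀ x ∈ Z, ∀ y ∈ Z, G.mul x y ∈ Z) ∧ (∀ x ∈ Z, G.inv x ∈ Z) ∧
    (∀ x ∈ Z, ∀ y ∈ Z, G.cmul x y ∈ Z) ∧ (∀ x ∈ Z, G.cinv x ∈ Z) ∧
    (∀ a, ∀ z ∈ Z, G.lam a z = z) ∧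
    (∀ a, (fun z => G.mul a z) '' Z = (fun z => G.cmul a z) '' Z) ∧
    (∀ a, ∀ z ∈ Z, G.mul (G.mul a z) (G.inv a) ∈ Z) ∧
    (∀ a, ∀ z ∈ Z, G.cmul (G.cmul a z) (G.cinv a) ∈ Z) :=
  ⟨one_mem_center,
    fun _ hx _ hy => mul_mem_center hsb hx hy,
    fun _ hx => inv_mem_center hsb hx,
    fun _ hx _ hy => cmul_mem_center hsb hx hy,
    fun _ hx => cinv_mem_center hsb hx,
    fun a _ hz => lam_of_mem_center hz a,
    image_mul_center_eq_image_cmul,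
    fun a _ hz => mul_conj_mem_center hz a,
    fun a _ hz => cmul_conj_mem_center hz a⟩
end
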